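/- arXiv:2209.06033 — 2 statements merged into one kernel-verified Lean document; each statement's English description precedes it below -/
import Mathlib

section
/- Let A be a real n×n matrix. Then A is semi-simple (diagonalizable over ℂ) if and only if exp(A) is semi-simple. -/
/-!
Over `ℂ` a matrix is diagonalizable exactly when its linear map is semisimple. Write the
complexification of `A` as `N + S` (Jordan–Chevalley), with `N` nilpotent, `S` diagonalizable,
`N` and `S` commuting. Then `exp A = exp S + exp S * (exp N - 1)`, where `exp S` is diagonalizable
and `exp S * (exp N - 1)` is a commuting nilpotent. If `exp A` is diagonalizable, that nilpotent
part is the difference of two commuting semisimple maps, hence semisimple, hence zero. So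
`exp N = 1`, and since `exp N - 1` is `N` times a unit, `N = 0`.
-/

open Matrix

/-- A real square matrix is semi-simple if it is diagonalizable over `ℂ`. -/
def Matrix.IsSemisimpleR {n : ℕ} (A : Matrix (Fin n) (Fin n) ℝ) : Prop :=
  ∃ (P : Matrix (Fin n) (Fin n) ℂ) (d : Fin n → ℂ),
    IsUnit P.det ∧ A.map (fun x => (x : ℂ)) = P * Matrix.diagonal d * P⁻¹

open Polynomial

namespace IsNilpotent

variable {A : Type*} [Ring A] [Algebra ℚ A]

theorem exp_eq_normedSpace_exp [TopologicalSpace A] [IsTopologicalRing A] {a : A}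
    (ha : IsNilpotent a) : exp a = NormedSpace.exp a := by
  obtain ⟨k, hk⟩ := ha
  rw [exp_eq_sum hk, NormedSpace.exp_eq_tsum_rat]
  exact (tsum_eq_sum fun i hi ↦ by rw [pow_eq_zero_of_le (by simpa using hi) hk, smul_zero]).symm

theorem exists_exp_eq_one_add_mul_one_add {a : A} (ha : IsNilpotent a) :
    ∃ w, Commute a w ∧ exp a = 1 + a * (1 + a * w) := by
  obtain ⟨k, hk⟩ := ha
  refine ⟨∑ i ∈ Finset.range k, ((i + 2).factorial : ℚ)⁻¹ • a ^ i,
    Commute.sum_right _ _ _ fun i _ ↦ ((Commute.refl a).pow_right i).smul_right _, ?_⟩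
  rw [exp_eq_sum (k := k + 2) (by rw [pow_add, hk, zero_mul]), Finset.sum_range_succ',
    Finset.sum_range_succ']
  simp [pow_succ', mul_add, Finset.mul_sum, add_comm, add_left_comm]

theorem exp_eq_one_iff {a : A} (ha : IsNilpotent a) : exp a = 1 ↔ a = 0 := by
  refine ⟨fun h ↦ ?_, fun h ↦ h ▸ exp_zero⟩
  obtain ⟨w, hw, hexp⟩ := ha.exists_exp_eq_one_add_mul_one_add
  have hunit : IsUnit (1 + a * w) := (hw.isNilpotent_mul_right ha).isUnit_one_add
  rwa [h, left_eq_add, hunit.mul_left_eq_zero] at hexp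

end IsNilpotent

theorem Module.End.IsSemisimple.exists_basis_apply_eq_smul {K V ι : Type*} [Field K]
    [IsAlgClosed K] [AddCommGroup V] [Module K V] [FiniteDimensional K V] {f : End K V}
    (hf : f.IsSemisimple) (b₀ : Basis ι K V) :
    ∃ (b : Basis ι K V) (d : ι → K), ∀ i, f (b i) = d i • b i := by
  classical
  have hint : DirectSum.IsInternal f.eigenspace :=
    (DirectSum.isInternal_submodule_iff_iSupIndep_and_iSup_eq_top _).mpr
      ⟨f.eigenspaces_iSupIndep, hf.iSup_eigenspace_eq_top⟩
  let b := hint.collectedBasis fun μ ↦ Free.chooseBasis K (f.eigenspace μ)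
  let e := b.indexEquiv b₀
  refine ⟨b.reindex e, fun i ↦ (e.symm i).1, fun i ↦ ?_⟩
  simpa [b] using mem_eigenspace_iff.mp (hint.collectedBasis_mem (fun μ ↦ Free.chooseBasis K (f.eigenspace μ)) (e.symm i))

namespace Matrix

section Field

variable {ι K : Type*} [Fintype ι] [DecidableEq ι] [Field K]

def IsDiagonalizable (B : Matrix ι ι K) : Prop :=
  ∃ (P : Matrix ι ι K) (d : ι → K), IsUnit P.det ∧ B = P * diagonal d * P⁻¹

theorem isSemisimple_toLin'_diagonal (d : ι → K) :
    Module.End.IsSemisimple (toLin' (diagonal d)) := by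
  classical
  set q : K[X] := ∏ c ∈ Finset.univ.image d, (X - C c)
  have hq : Squarefree q := by
    simpa using (separable_prod_X_sub_C_iff' (s := Finset.univ.image d) (f := id)).mpr
      (fun _ _ _ _ h ↦ h) |>.squarefree
  have hd : aeval d q = 0 := funext fun i ↦ by
    simpa [q, Finset.prod_eq_zero_iff] using ⟨i, sub_self _⟩
  refine Module.End.isSemisimple_of_squarefree_aeval_eq_zero hq ?_
  rw [show toLin' (diagonal d) = toLinAlgEquiv' (diagonalAlgHom K d) from rfl,
    aeval_algEquiv, AlgHom.comp_apply, aeval_algHom_apply, hd, map_zero, map_zero]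

theorem IsDiagonalizable.isSemisimple_toLin' {B : Matrix ι ι K} (hB : B.IsDiagonalizable) :
    Module.End.IsSemisimple (toLin' B) := by
  obtain ⟨P, d, hP, rfl⟩ := hB
  let e : (ι → K) ≃ₗ[K] (ι → K) := toLin'OfInv (P.nonsing_inv_mul hP) (P.mul_nonsing_inv hP)
  refine (LinearEquiv.isSemisimple_iff _ _ e ?_).mp (isSemisimple_toLin'_diagonal d)
  change toLin' P ∘ₗ _ = _ ∘ₗ toLin' P
  rw [← toLin'_mul, ← toLin'_mul, mul_assoc, mul_assoc, P.nonsing_inv_mul hP, mul_one]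

theorem isDiagonalizable_of_basis_apply_eq_smul {B : Matrix ι ι K}
    (b : Module.Basis ι K (ι → K)) (d : ι → K) (hb : ∀ i, toLin' B (b i) = d i • b i) :
    B.IsDiagonalizable := by
  have hdiag : LinearMap.toMatrix b b (toLin' B) = diagonal d := by
    ext i j
    rcases eq_or_ne i j with rfl | h
    · simp [LinearMap.toMatrix_apply, hb]
    · simp [LinearMap.toMatrix_apply, hb, h]
  have hinv := Module.Basis.toMatrix_mul_toMatrix_flip (Pi.basisFun K ι) b
  refine ⟨(Pi.basisFun K ι).toMatrix b, d, isUnit_det_of_right_inverse hinv, ?_⟩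
  rw [inv_eq_right_inv hinv, ← hdiag, basis_toMatrix_mul_linearMap_toMatrix_mul_basis_toMatrix,
    LinearMap.toMatrix_eq_toMatrix', LinearMap.toMatrix'_toLin']

theorem isDiagonalizable_iff_isSemisimple_toLin' [IsAlgClosed K] {B : Matrix ι ι K} :
    B.IsDiagonalizable ↔ Module.End.IsSemisimple (toLin' B) := by
  refine ⟨IsDiagonalizable.isSemisimple_toLin', fun hB ↦ ?_⟩
  obtain ⟨b, d, hb⟩ := hB.exists_basis_apply_eq_smul (Pi.basisFun K ι)
  exact isDiagonalizable_of_basis_apply_eq_smul b d hb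

theorem IsDiagonalizable.eq_zero_of_isNilpotent_of_isDiagonalizable_add [PerfectField K]
    {X Y : Matrix ι ι K} (hX : X.IsDiagonalizable) (hXY : (X + Y).IsDiagonalizable)
    (hY : IsNilpotent Y) (hc : Commute X Y) : Y = 0 := by
  let φ : Matrix ι ι K ≃ₐ[K] Module.End K (ι → K) := toLinAlgEquiv'
  have hss : (φ Y).IsSemisimple := by
    simpa [map_add] using hXY.isSemisimple_toLin'.sub_of_commute
      (((Commute.refl X).add_right hc).symm.map φ) hX.isSemisimple_toLin'
  exact φ.injective <| by
    simpa using Module.End.eq_zero_of_isNilpotent_isSemisimple (hY.map φ) hss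

theorem exists_isNilpotent_isDiagonalizable [IsAlgClosed K] (B : Matrix ι ι K) :
    ∃ N S : Matrix ι ι K, IsNilpotent N ∧ S.IsDiagonalizable ∧ Commute N S ∧ B = N + S := by
  let φ : Matrix ι ι K ≃ₐ[K] Module.End K (ι → K) := toLinAlgEquiv'
  obtain ⟨n, hn, s, hs, hnil, hss, hsum⟩ := (φ B).exists_isNilpotent_isSemisimple
  have hns : Commute n s := Algebra.commute_of_mem_adjoin_singleton_of_commute hs
    (Algebra.commute_of_mem_adjoin_self hn).symm
  refine ⟨φ.symm n, φ.symm s, hnil.map φ.symm, ?_, hns.map φ.symm, φ.injective (by simp [hsum])⟩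
  rw [isDiagonalizable_iff_isSemisimple_toLin']
  exact (φ.apply_symm_apply s).symm ▸ hss

end Field

section Exp

variable {ι : Type*} [Fintype ι] [DecidableEq ι]

theorem exp_map {𝔸 𝔹 : Type*} [NormedRing 𝔸] [NormedAlgebra ℚ 𝔸] [CompleteSpace 𝔸]
    [NormedRing 𝔹] [NormedAlgebra ℚ 𝔹] (f : 𝔸 →+* 𝔹) (hf : Continuous f) (M : Matrix ι ι 𝔸) :
    (NormedSpace.exp M).map f = NormedSpace.exp (M.map f) := by
  -- taken before the operator norm is installed: instance search does not see through it
  have hcomplete : CompleteSpace (Matrix ι ι 𝔸) := inferInstance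
  let _ : NormedRing (Matrix ι ι 𝔸) := Matrix.linftyOpNormedRing
  let _ : NormedAlgebra ℚ (Matrix ι ι 𝔸) := Matrix.linftyOpNormedAlgebra
  let _ : NormedRing (Matrix ι ι 𝔹) := Matrix.linftyOpNormedRing
  let _ : NormedAlgebra ℚ (Matrix ι ι 𝔹) := Matrix.linftyOpNormedAlgebra
  exact @NormedSpace.map_exp _ _ _ _ hcomplete _ _ _ _ _ f.mapMatrix
    (continuous_id.matrix_map hf) M

variable {𝕜 : Type*} [NormedField 𝕜] [NormedAlgebra ℚ 𝕜] [CompleteSpace 𝕜]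

theorem IsDiagonalizable.exp {B : Matrix ι ι 𝕜} (hB : B.IsDiagonalizable) :
    (NormedSpace.exp B).IsDiagonalizable := by
  obtain ⟨P, d, hP, rfl⟩ := hB
  exact ⟨P, NormedSpace.exp d, hP, by
    rw [exp_conj _ _ ((isUnit_iff_isUnit_det P).mpr hP), exp_diagonal]⟩

theorem isDiagonalizable_exp_iff [IsAlgClosed 𝕜] (B : Matrix ι ι 𝕜) :
    (NormedSpace.exp B).IsDiagonalizable ↔ B.IsDiagonalizable := by
  refine ⟨fun h ↦ ?_, IsDiagonalizable.exp⟩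
  obtain ⟨N, S, hN, hS, hNS, rfl⟩ := exists_isNilpotent_isDiagonalizable B
  have hexp : NormedSpace.exp (N + S) =
      NormedSpace.exp S + NormedSpace.exp S * (IsNilpotent.exp N - 1) := by
    rw [add_comm, exp_add_of_commute _ _ hNS.symm, hN.exp_eq_normedSpace_exp, mul_sub, mul_one,
      add_sub_cancel]
  have hc : Commute (NormedSpace.exp S) (IsNilpotent.exp N - 1) := by
    rw [hN.exp_eq_normedSpace_exp]
    exact hNS.symm.exp.sub_right (Commute.one_right _)
  have hzero := hS.exp.eq_zero_of_isNilpotent_of_isDiagonalizable_add (hexp ▸ h)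
    (hc.isNilpotent_mul_left hN.isNilpotent_exp_sub_one) ((Commute.refl _).mul_right hc)
  rw [(isUnit_exp S).mul_right_eq_zero, sub_eq_zero, hN.exp_eq_one_iff] at hzero
  rwa [hzero, zero_add]

end Exp

end Matrix

/-- A real matrix `A` is semi-simple if and only if `exp A` is semi-simple. -/
theorem isSemisimpleR_iff_exp_isSemisimpleR {n : ℕ} (A : Matrix (Fin n) (Fin n) ℝ) :
    A.IsSemisimpleR ↔ (NormedSpace.exp A).IsSemisimpleR := by
  change (A.map Complex.ofRealHom).IsDiagonalizable ↔
    ((NormedSpace.exp A).map Complex.ofRealHom).IsDiagonalizable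
  rw [exp_map _ Complex.continuous_ofReal, isDiagonalizable_exp_iff]
end

section
/- Let M ∈ SO(n) such that −1 is not an eigenvalue of M. Then M has exactly one principal skew-symmetric real logarithm: there is a unique skew-symmetric real matrix X with exp(X) = M such that every eigenvalue of X has imaginary part in [−π, π]. -/
/-!
After complexification `M` becomes a unitary matrix `U` whose spectrum avoids `-1`, so the
principal argument is continuous on it and the continuous functional calculus gives the
skew-adjoint logarithm `I • arg U`, with spectrum in `I • (-π, π]`. Conversely, if `Y = I • x` is
a skew-adjoint logarithm of `U` with spectrum in the strip, then `‖x‖ ≤ π`, and `‖x‖ = π` is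
excluded because then `‖exp (I • x) - 1‖ ^ 2 = 2 * (1 - cos ‖x‖) = 4`, whereas `-1 ∉ σ U` means
`‖U - 1‖ < 2`; for `‖x‖ < π` the argument inverts `exp (I • ·)`, so `x = arg U`. The logarithm is
real because its entrywise conjugate is again a principal logarithm of the real matrix `U`.
-/

open Matrix NormedSpace
open scoped Real

def IsPrincipalSkewLog {A : Type*} [Ring A] [StarRing A] [Algebra ℂ A] [TopologicalSpace A]
    [IsTopologicalRing A] (u y : A) : Prop :=
  y ∈ skewAdjoint A ∧ exp y = u ∧ ∀ μ ∈ spectrum ℂ y, μ.im ∈ Set.Icc (-π) π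

section CStarAlgebra

open Complex selfAdjoint Unitary

variable {A : Type*} [CStarAlgebra A]

lemma IsSelfAdjoint.norm_le_iff_forall_mem_spectrum_I_smul {x : A} (hx : IsSelfAdjoint x)
    {r : ℝ} (hr : 0 ≤ r) :
    ‖x‖ ≤ r ↔ ∀ μ ∈ spectrum ℂ (I • x), μ.im ∈ Set.Icc (-r) r := by
  obtain _ | _ := subsingleton_or_nontrivial A
  · simp [Subsingleton.elim x 0, hr]
  have hI : (I • x : A) = (Units.mk0 I I_ne_zero) • x := rfl
  constructor
  · intro hxr μ hμ
    rw [hI, spectrum.unit_smul_eq_smul] at hμ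
    obtain ⟨ν, hν, rfl⟩ := hμ
    have hre : |ν.re| ≤ r := (abs_re_le_norm ν).trans ((spectrum.norm_le_norm_of_mem hν).trans hxr)
    simpa [Units.smul_def, abs_le] using hre
  · intro h
    have habs : ∀ s ∈ spectrum ℝ x, |s| ≤ r := fun s hs => by
      have hC := hx.spectrumRestricts.algebraMap_image ▸ Set.mem_image_of_mem (algebraMap ℝ ℂ) hs
      have hIs := h _ (hI ▸ spectrum.smul_mem_smul_iff.mpr hC)
      simpa [Units.smul_def, abs_le] using hIs
    obtain hmem | hmem := CStarAlgebra.norm_or_neg_norm_mem_spectrum hx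
    · simpa using habs _ hmem
    · simpa using habs _ hmem

lemma Unitary.eq_argSelfAdjoint_of_expUnitary_eq {u : unitary A} (hu : -1 ∉ spectrum ℂ (u : A))
    {x : selfAdjoint A} (hx : ‖x‖ ≤ π) (hxu : expUnitary x = u) : x = argSelfAdjoint u := by
  have hlt : ‖x‖ < π := by
    refine hx.lt_of_ne fun hπ => ?_
    have h_lt_two := (norm_sub_one_lt_two_iff u.2).mpr hu
    have h_sq := norm_sq_expUnitary_sub_one hx
    rw [hxu, hπ, Real.cos_pi] at h_sq
    nlinarith [norm_nonneg ((u : A) - 1)]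
  rw [← hxu, argSelfAdjoint_expUnitary hlt]

theorem Unitary.existsUnique_isPrincipalSkewLog {u : A} (hu : u ∈ unitary A)
    (hneg : -1 ∉ spectrum ℂ u) : ∃! y : A, IsPrincipalSkewLog u y := by
  set v : unitary A := ⟨u, hu⟩
  refine ⟨I • (argSelfAdjoint v : A), ⟨(argSelfAdjoint v).2.I_smul_mem_skewAdjoint, ?_, ?_⟩, ?_⟩
  · exact congrArg Subtype.val (expUnitary_argSelfAdjoint ((norm_sub_one_lt_two_iff hu).mpr hneg))
  · exact ((argSelfAdjoint v).2.norm_le_iff_forall_mem_spectrum_I_smul Real.pi_pos.le).mp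
      (norm_argSelfAdjoint_le_pi v)
  · rintro y ⟨hy, hexp, hspec⟩
    set x := skewAdjoint.negISMul ⟨y, hy⟩
    have hIx : I • (x : A) = y := skewAdjoint.I_smul_neg_I ⟨y, hy⟩
    have hx : ‖x‖ ≤ π := by
      rw [← hIx] at hspec
      exact (x.2.norm_le_iff_forall_mem_spectrum_I_smul Real.pi_pos.le).mpr hspec
    have hxu : expUnitary x = v := Subtype.ext (by simp [hIx, hexp, v])
    rw [← hIx, eq_argSelfAdjoint_of_expUnitary_eq hneg hx hxu]

end CStarAlgebra

namespace Matrix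

variable {m : Type*}

lemma exists_map_ofReal_eq_of_map_conj_eq {Z : Matrix m m ℂ} (hZ : Z.map (starRingEnd ℂ) = Z) :
    ∃ X : Matrix m m ℝ, X.map (↑) = Z :=
  ⟨Z.map Complex.re, by ext i j; exact Complex.conj_eq_iff_re.mp (congrFun₂ hZ i j)⟩

variable [Fintype m] [DecidableEq m]

noncomputable def ofRealStarAlgHom : Matrix m m ℝ →⋆ₐ[ℝ] Matrix m m ℂ where
  toAlgHom := Complex.ofRealAm.mapMatrix
  map_star' M := by ext; simp [star_eq_conjTranspose]

@[simp]
lemma ofRealStarAlgHom_apply (X : Matrix m m ℝ) : ofRealStarAlgHom X = X.map (↑) := rfl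

lemma ofRealStarAlgHom_injective : Function.Injective (ofRealStarAlgHom (m := m)) :=
  fun _ _ h => by ext i j; simpa using congrFun₂ h i j

lemma mem_spectrum_map_conj_iff {Z : Matrix m m ℂ} {μ : ℂ} :
    μ ∈ spectrum ℂ (Z.map (starRingEnd ℂ)) ↔ starRingEnd ℂ μ ∈ spectrum ℂ Z := by
  have : algebraMap ℂ _ μ - Z.map (starRingEnd ℂ) =
      (starRingEnd ℂ).mapMatrix (algebraMap ℂ _ (starRingEnd ℂ μ) - Z) := by
    ext i j; by_cases h : i = j <;> simp [algebraMap_matrix_apply, h]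
  simp only [spectrum.mem_iff, this, isUnit_iff_isUnit_det, ← RingHom.map_det, isUnit_iff_ne_zero,
    map_ne_zero]

-- `exp` only depends on the topology, so the proofs below may use the `L2` operator norm, which
-- makes complex matrices a C⋆-algebra.
theorem existsUnique_isPrincipalSkewLog {U : Matrix m m ℂ} (hU : U ∈ unitaryGroup m ℂ)
    (hneg : -1 ∉ spectrum ℂ U) : ∃! Y : Matrix m m ℂ, IsPrincipalSkewLog U Y := by
  open scoped Matrix.Norms.L2Operator in
  exact Unitary.existsUnique_isPrincipalSkewLog hU hneg

lemma exp_ofRealStarAlgHom (X : Matrix m m ℝ) :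
    exp (ofRealStarAlgHom X) = ofRealStarAlgHom (exp X) := by
  open scoped Matrix.Norms.L2Operator in
  let +nondep : NormedAlgebra ℚ (Matrix m m ℝ) := .restrictScalars ℚ ℝ _
  exact (map_exp ofRealStarAlgHom (continuous_id.matrix_map Complex.continuous_ofReal) X).symm

lemma exp_map_conj (Z : Matrix m m ℂ) :
    exp (Z.map (starRingEnd ℂ)) = (exp Z).map (starRingEnd ℂ) := by
  open scoped Matrix.Norms.L2Operator in
  let +nondep : NormedAlgebra ℚ (Matrix m m ℂ) := .restrictScalars ℚ ℂ _
  exact (map_exp (starRingEnd ℂ).mapMatrix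
    (continuous_id.matrix_map Complex.continuous_conj) Z).symm

lemma _root_.IsPrincipalSkewLog.map_conj {U Y : Matrix m m ℂ} (hY : IsPrincipalSkewLog U Y)
    (hU : U.map (starRingEnd ℂ) = U) : IsPrincipalSkewLog U (Y.map (starRingEnd ℂ)) := by
  obtain ⟨hskew, hexp, hspec⟩ := hY
  refine ⟨?_, by rw [exp_map_conj, hexp, hU], fun μ hμ => ?_⟩
  · ext i j
    simpa using congrArg (starRingEnd ℂ) (congrFun₂ hskew i j)
  · have hconj := hspec _ (mem_spectrum_map_conj_iff.mp hμ)
    simp only [Complex.conj_im, Set.mem_Icc] at hconj ⊢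
    constructor <;> linarith [hconj.1, hconj.2]

lemma isPrincipalSkewLog_map_ofReal_iff {M X : Matrix m m ℝ} :
    IsPrincipalSkewLog (M.map (↑)) (X.map ((↑) : ℝ → ℂ)) ↔
      Xᵀ = -X ∧ exp X = M ∧ ∀ μ ∈ spectrum ℂ (X.map ((↑) : ℝ → ℂ)), μ.im ∈ Set.Icc (-π) π := by
  have hskew : X.map ((↑) : ℝ → ℂ) ∈ skewAdjoint _ ↔ Xᵀ = -X := by
    rw [skewAdjoint.mem_iff, ← ofRealStarAlgHom_apply, ← map_star, ← map_neg,
      ofRealStarAlgHom_injective.eq_iff, star_eq_conjTranspose,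
      conjTranspose_eq_transpose_of_trivial]
  have hexp : exp (X.map ((↑) : ℝ → ℂ)) = M.map (↑) ↔ exp X = M := by
    rw [← ofRealStarAlgHom_apply, ← ofRealStarAlgHom_apply, exp_ofRealStarAlgHom,
      ofRealStarAlgHom_injective.eq_iff]
  rw [IsPrincipalSkewLog, hskew, hexp]

end Matrix

theorem unique_principal_skew_log_general {n : ℕ} (M : Matrix (Fin n) (Fin n) ℝ)
    (hM : M ∈ Matrix.orthogonalGroup (Fin n) ℝ)
    (hneg : (-1 : ℂ) ∉ spectrum ℂ (M.map (fun x => (x : ℂ)))) :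
    ∃! X : Matrix (Fin n) (Fin n) ℝ,
      Xᵀ = -X ∧ NormedSpace.exp X = M ∧
        ∀ μ ∈ spectrum ℂ (X.map (fun x => (x : ℂ))),
          μ.im ∈ Set.Icc (-Real.pi) Real.pi := by
  have hU : M.map (↑) ∈ unitaryGroup (Fin n) ℂ := Unitary.map_mem ofRealStarAlgHom hM
  obtain ⟨Y, hY, hY_unique⟩ := existsUnique_isPrincipalSkewLog hU hneg
  obtain ⟨X, rfl⟩ := exists_map_ofReal_eq_of_map_conj_eq <|
    hY_unique _ (hY.map_conj (by ext; simp))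
  exact ⟨X, isPrincipalSkewLog_map_ofReal_iff.mp hY, fun X' hX' =>
    ofRealStarAlgHom_injective (hY_unique _ (isPrincipalSkewLog_map_ofReal_iff.mpr hX'))⟩

/-- If `M ∈ SO(n)` and `-1` is not an eigenvalue of `M`, then `M` has exactly one
principal skew-symmetric real logarithm: a unique skew-symmetric `X` with `exp X = M`
whose eigenvalues all have imaginary part in `[-π, π]`. -/
theorem unique_principal_skew_log {n : ℕ} (M : Matrix (Fin n) (Fin n) ℝ)
    (hM : M ∈ Matrix.orthogonalGroup (Fin n) ℝ) (hdet : M.det = 1)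
    (hneg : (-1 : ℂ) ∉ spectrum ℂ (M.map (fun x => (x : ℂ)))) :
    ∃! X : Matrix (Fin n) (Fin n) ℝ,
      Xᵀ = -X ∧ NormedSpace.exp X = M ∧
        ∀ μ ∈ spectrum ℂ (X.map (fun x => (x : ℂ))),
          μ.im ∈ Set.Icc (-Real.pi) Real.pi :=
  unique_principal_skew_log_general M hM hneg
end
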